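/- With the Moser sequence u_n as above and α_N = N (Nπ^{N/2}/Γ(N/2+1))^{1/(N−1)}, one has ∫_{ℝ^N} φ_N(α_N (1 − β/N) |u_n|^{N/(N−1)}) |x|^{−β} dx ≥ ω_{N−1} φ_N(n) e^{−n}/(N−β), and this lower bound converges to ω_{N−1}/(N−β) as n → ∞. -/

import Mathlib

open MeasureTheory Real Filter

noncomputable section

/-- ω_{N-1} = N π^{N/2} / Γ(N/2 + 1), the surface area of the unit sphere in ℝ^N. -/
def sphereArea (N : ℕ) : ℝ := N * Real.pi ^ ((N : ℝ) / 2) / Real.Gamma ((N : ℝ) / 2 + 1)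

/-- The Moser sequence u_n. -/
def moser (N : ℕ) (β : ℝ) (n : ℕ) (x : EuclideanSpace ℝ (Fin N)) : ℝ :=
  if 1 ≤ ‖x‖ then 0
  else if Real.exp (-(n : ℝ) / ((N : ℝ) - β)) < ‖x‖ then
    (((N : ℝ) - β) / (sphereArea N * n)) ^ ((N : ℝ)⁻¹) * Real.log (1 / ‖x‖)
  else (1 / sphereArea N) ^ ((N : ℝ)⁻¹) * ((n : ℝ) / ((N : ℝ) - β)) ^ (((N : ℝ) - 1) / N)

/-- The truncated exponential φ_N(t) = e^t - ∑_{j=0}^{N-2} t^j/j!. -/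
def phiN (N : ℕ) (t : ℝ) : ℝ :=
  Real.exp t - ∑ j ∈ Finset.range (N - 1), t ^ j / (j.factorial : ℝ)

/-- α_N = N (N π^{N/2} / Γ(N/2+1))^{1/(N-1)}. -/
def alphaN (N : ℕ) : ℝ :=
  N * (N * Real.pi ^ ((N : ℝ) / 2) / Real.Gamma ((N : ℝ) / 2 + 1)) ^ (((N : ℝ) - 1)⁻¹)

open Set Metric

lemma aux_integrable {N : ℕ} (hN : 1 ≤ N) {F : ℝ → ℝ} (hFm : Measurable F)
    (hF : IntegrableOn (fun y : ℝ => y ^ (N - 1) * F y) (Set.Ioi (0:ℝ))) :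
    Integrable (fun x : EuclideanSpace ℝ (Fin N) => F ‖x‖) := by
  haveI : Nontrivial (EuclideanSpace ℝ (Fin N)) :=
    Module.nontrivial_of_finrank_pos (R := ℝ) (by rw [finrank_euclideanSpace_fin]; omega)
  have hdim : Module.finrank ℝ (EuclideanSpace ℝ (Fin N)) = N := finrank_euclideanSpace_fin
  set μ : Measure (EuclideanSpace ℝ (Fin N)) := volume with hμ
  -- step 1 : to the subtype (Ioi 0)
  have h1 : Integrable (fun y : Set.Ioi (0:ℝ) => (y:ℝ) ^ (N - 1) * F y)
      (Measure.comap Subtype.val volume) := by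
    have h := (MeasurableEmbedding.subtype_coe (measurableSet_Ioi (a := (0:ℝ)))).integrable_map_iff
      (μ := Measure.comap (Subtype.val : Set.Ioi (0:ℝ) → ℝ) volume)
      (g := fun y : ℝ => y ^ (N - 1) * F y)
    rw [map_comap_subtype_coe (measurableSet_Ioi (a := (0:ℝ)))] at h
    exact h.mp hF
  -- step 2 : withDensity
  have h2 : Integrable (fun y : Set.Ioi (0:ℝ) => F y) (Measure.volumeIoiPow (N - 1)) := by
    rw [Measure.volumeIoiPow, integrable_withDensity_iff_integrable_smul'
      (by exact (measurable_subtype_coe.pow_const _).ennreal_ofReal)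
      (Eventually.of_forall fun x => ENNReal.ofReal_lt_top)]
    refine h1.congr (Eventually.of_forall fun y => ?_)
    simp only [smul_eq_mul]
    rw [ENNReal.toReal_ofReal (pow_nonneg (le_of_lt y.2) _)]
  -- step 3 : product with the sphere
  have h3 : Integrable (fun z : sphere (0 : EuclideanSpace ℝ (Fin N)) 1 × Set.Ioi (0:ℝ) => F z.2)
      (μ.toSphere.prod (Measure.volumeIoiPow (N - 1))) := by
    have h := integrable_map_measure (μ := μ.toSphere.prod (Measure.volumeIoiPow (N - 1)))
      (f := Prod.snd) (g := fun y : Set.Ioi (0:ℝ) => F y)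
      (by
        exact ((hFm.comp measurable_subtype_coe).aestronglyMeasurable))
      measurable_snd.aemeasurable
    rw [Measure.map_snd_prod] at h
    exact h.mp (h2.smul_measure (measure_ne_top _ _))
  -- step 4 : back through the homeomorphism
  have h4 : Integrable
      (fun x : ({(0 : EuclideanSpace ℝ (Fin N))}ᶜ : Set (EuclideanSpace ℝ (Fin N))) => F ‖(x : EuclideanSpace ℝ (Fin N))‖)
      (μ.comap Subtype.val) := by
    have hmp := μ.measurePreserving_homeomorphUnitSphereProd
    rw [hdim] at hmp
    convert (hmp.integrable_comp_emb (Homeomorph.measurableEmbedding _)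
      (g := fun z : sphere (0 : EuclideanSpace ℝ (Fin N)) 1 × Set.Ioi (0:ℝ) => F z.2)).mpr h3 using 1
    funext x
    simp [Function.comp]
  have h5 : Integrable (fun x : EuclideanSpace ℝ (Fin N) => F ‖x‖)
      (μ.restrict {(0 : EuclideanSpace ℝ (Fin N))}ᶜ) := by
    rw [← map_comap_subtype_coe (measurableSet_singleton _).compl]
    exact ((MeasurableEmbedding.subtype_coe (measurableSet_singleton _).compl).integrable_map_iff).mpr h4
  rwa [restrict_compl_singleton] at h5


lemma ball_rpow_integral {N : ℕ} (hN : 2 ≤ N) {β ρ : ℝ} (hβ : β < N) (hρ : 0 < ρ) :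
    ∫ x : EuclideanSpace ℝ (Fin N) in Metric.closedBall 0 ρ, ‖x‖ ^ (-β)
      = sphereArea N * ρ ^ ((N:ℝ) - β) / ((N:ℝ) - β) := by
  haveI : Nontrivial (EuclideanSpace ℝ (Fin N)) :=
    Module.nontrivial_of_finrank_pos (R := ℝ) (by rw [finrank_euclideanSpace_fin]; omega)
  have hNβ : (0:ℝ) < (N:ℝ) - β := by linarith
  set G : ℝ → ℝ := fun y => if y ≤ ρ then y ^ (-β) else 0 with hG
  have h0 : ∫ x : EuclideanSpace ℝ (Fin N) in Metric.closedBall 0 ρ, ‖x‖ ^ (-β)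
      = ∫ x : EuclideanSpace ℝ (Fin N), G ‖x‖ := by
    rw [← integral_indicator measurableSet_closedBall]
    refine integral_congr_ae (Eventually.of_forall fun x => ?_)
    by_cases h : ‖x‖ ≤ ρ <;>
      simp [hG, Set.indicator_apply, mem_closedBall_zero_iff, h]
  rw [h0, integral_fun_norm_addHaar volume G, finrank_euclideanSpace_fin]
  have hJ : ∫ y in Ioi (0:ℝ), y ^ (N - 1) • G y = ρ ^ ((N:ℝ) - β) / ((N:ℝ) - β) := by
    have h1 : Set.EqOn (fun y : ℝ => y ^ (N - 1) • G y)
        ((Iic ρ).indicator (fun y : ℝ => y ^ ((N:ℝ) - 1 - β))) (Ioi 0) := by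
      intro y hy
      by_cases h : y ≤ ρ
      · simp only [hG, if_pos h, Set.indicator_of_mem (mem_Iic.mpr h), smul_eq_mul]
        rw [← Real.rpow_natCast y (N - 1), ← Real.rpow_add hy]
        congr 1
        push_cast [Nat.cast_sub (by omega : 1 ≤ N)]
        ring
      · simp [hG, h, Set.indicator_of_notMem (by simpa using h : y ∉ Iic ρ)]
    rw [setIntegral_congr_fun measurableSet_Ioi h1, setIntegral_indicator measurableSet_Iic,
      Set.Ioi_inter_Iic, ← intervalIntegral.integral_of_le hρ.le,
      integral_rpow (Or.inl (by linarith : (-1:ℝ) < (N:ℝ) - 1 - β))]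
    rw [show (N:ℝ) - 1 - β + 1 = (N:ℝ) - β by ring, Real.zero_rpow (by linarith), sub_zero]
  rw [hJ]
  haveI : Nonempty (Fin N) := ⟨⟨0, by omega⟩⟩
  have hvol : (volume (Metric.ball (0 : EuclideanSpace ℝ (Fin N)) 1)).toReal
      = Real.pi ^ ((N:ℝ)/2) / Real.Gamma ((N:ℝ)/2 + 1) := by
    rw [EuclideanSpace.volume_ball]
    simp only [Fintype.card_fin, ENNReal.ofReal_one, one_pow, one_mul]
    rw [ENNReal.toReal_ofReal (by
      have := Real.Gamma_pos_of_pos (show (0:ℝ) < (N:ℝ)/2 + 1 by positivity)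
      positivity)]
    rw [Real.sqrt_eq_rpow, ← Real.rpow_natCast (Real.pi ^ ((1:ℝ)/2)) N,
      ← Real.rpow_mul Real.pi_pos.le]
    norm_num
    rw [show (1:ℝ)/2 * (N:ℝ) = (N:ℝ)/2 by ring]
  rw [measureReal_def, hvol, nsmul_eq_mul, smul_eq_mul, sphereArea]
  ring




section basic

variable {N : ℕ} (hN : 2 ≤ N)

lemma sphereArea_pos (hN : 2 ≤ N) : 0 < sphereArea N := by
  have hΓ : 0 < Real.Gamma ((N : ℝ) / 2 + 1) :=
    Real.Gamma_pos_of_pos (by positivity)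
  have hN0 : (0:ℝ) < N := by exact_mod_cast (by omega : 0 < N)
  rw [sphereArea]
  positivity

lemma alphaN_eq : alphaN N = N * sphereArea N ^ (((N : ℝ) - 1)⁻¹) := rfl

lemma phiN_zero (hN : 2 ≤ N) : phiN N 0 = 0 := by
  unfold phiN
  rw [Real.exp_zero]
  have h : ∑ j ∈ Finset.range (N - 1), (0:ℝ) ^ j / (j.factorial : ℝ) = 1 := by
    rw [Finset.sum_eq_single 0]
    · norm_num
    · intro j _ hj; rw [zero_pow hj, zero_div]
    · intro h; exact absurd (Finset.mem_range.mpr (by omega)) h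
  rw [h, sub_self]

lemma phiN_nonneg {t : ℝ} (ht : 0 ≤ t) : 0 ≤ phiN N t :=
  sub_nonneg.mpr (Real.sum_le_exp_of_nonneg ht _)

lemma phiN_le_exp {t : ℝ} (ht : 0 ≤ t) : phiN N t ≤ Real.exp t :=
  sub_le_self _ (Finset.sum_nonneg fun j _ =>
    div_nonneg (pow_nonneg ht _) (Nat.cast_nonneg _))

lemma continuous_phiN : Continuous (phiN N) := by
  unfold phiN
  exact Real.continuous_exp.sub (continuous_finset_sum _ fun j _ => (continuous_pow j).div_const _)

lemma measurable_moser (β : ℝ) (n : ℕ) : Measurable (moser N β n) := by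
  unfold moser
  refine Measurable.ite (measurableSet_le measurable_const measurable_norm) measurable_const ?_
  refine Measurable.ite (measurableSet_lt measurable_const measurable_norm) ?_ measurable_const
  exact (Real.measurable_log.comp (measurable_const.div measurable_norm)).const_mul _

end basic

section algebra

variable {N n : ℕ} {β : ℝ}

lemma const_identity (hN : 2 ≤ N) (hn : 1 ≤ n) (hβ0 : 0 ≤ β) (hβ : β < N) :
    alphaN N * (1 - β / N) *
      ((1 / sphereArea N) ^ ((N : ℝ)⁻¹) * ((n : ℝ) / ((N : ℝ) - β)) ^ (((N : ℝ) - 1) / N))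
        ^ ((N : ℝ) / ((N : ℝ) - 1)) = n := by
  have hω := sphereArea_pos hN
  have hN0 : (0:ℝ) < N := by exact_mod_cast (by omega : 0 < N)
  have hN1 : (1:ℝ) < N := by exact_mod_cast (by omega : 1 < N)
  have hNβ : (0:ℝ) < (N:ℝ) - β := by linarith
  have hn0 : (0:ℝ) < n := by exact_mod_cast (by omega : 0 < n)
  have ht : (0:ℝ) < (n : ℝ) / ((N : ℝ) - β) := by positivity
  rw [Real.mul_rpow (Real.rpow_nonneg (by positivity) _) (Real.rpow_nonneg ht.le _),
    ← Real.rpow_mul (by positivity : (0:ℝ) ≤ 1 / sphereArea N),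
    ← Real.rpow_mul ht.le]
  have e1 : (N : ℝ)⁻¹ * ((N : ℝ) / ((N : ℝ) - 1)) = ((N : ℝ) - 1)⁻¹ := by
    field_simp
  have e2 : ((N : ℝ) - 1) / N * ((N : ℝ) / ((N : ℝ) - 1)) = 1 := by
    field_simp
    exact div_self (by linarith)
  rw [e1, e2, Real.rpow_one, alphaN_eq]
  have hωq : sphereArea N ^ (((N : ℝ) - 1)⁻¹) * (1 / sphereArea N) ^ (((N : ℝ) - 1)⁻¹) = 1 := by
    rw [← Real.mul_rpow hω.le (by positivity), mul_one_div, div_self hω.ne', Real.one_rpow]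
  have step : (N : ℝ) * sphereArea N ^ (((N : ℝ) - 1)⁻¹) * (1 - β / N) *
      ((1 / sphereArea N) ^ (((N : ℝ) - 1)⁻¹) * ((n : ℝ) / ((N : ℝ) - β)))
      = ((N : ℝ) * (1 - β / N)) *
        (sphereArea N ^ (((N : ℝ) - 1)⁻¹) * (1 / sphereArea N) ^ (((N : ℝ) - 1)⁻¹)) *
        ((n : ℝ) / ((N : ℝ) - β)) := by ring
  rw [step, hωq, mul_one]
  have e3 : (N : ℝ) * (1 - β / N) = (N : ℝ) - β := by field_simp
  rw [e3]
  field_simp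

lemma moser_nonneg_le (hN : 2 ≤ N) (hn : 1 ≤ n) (hβ0 : 0 ≤ β) (hβ : β < N)
    (x : EuclideanSpace ℝ (Fin N)) :
    0 ≤ moser N β n x ∧ moser N β n x ≤
      (1 / sphereArea N) ^ ((N : ℝ)⁻¹) * ((n : ℝ) / ((N : ℝ) - β)) ^ (((N : ℝ) - 1) / N) := by
  have hω := sphereArea_pos hN
  have hN0 : (0:ℝ) < N := by exact_mod_cast (by omega : 0 < N)
  have hNβ : (0:ℝ) < (N:ℝ) - β := by linarith
  have hn0 : (0:ℝ) < n := by exact_mod_cast (by omega : 0 < n)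
  have ht : (0:ℝ) < (n : ℝ) / ((N : ℝ) - β) := by positivity
  have hM0 : 0 ≤ (1 / sphereArea N) ^ ((N : ℝ)⁻¹) * ((n : ℝ) / ((N : ℝ) - β)) ^ (((N : ℝ) - 1) / N) :=
    mul_nonneg (Real.rpow_nonneg (by positivity) _) (Real.rpow_nonneg ht.le _)
  unfold moser
  split_ifs with h1 h2
  · exact ⟨le_refl 0, hM0⟩
  · -- middle region
    push_neg at h1
    have hx0 : 0 < ‖x‖ := lt_trans (Real.exp_pos _) h2
    have hlog0 : 0 ≤ Real.log (1 / ‖x‖) := Real.log_nonneg (by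
      rw [le_div_iff₀ hx0, one_mul]; exact h1.le)
    have hc₂ : (0:ℝ) ≤ (((N : ℝ) - β) / (sphereArea N * n)) ^ ((N : ℝ)⁻¹) :=
      Real.rpow_nonneg (by positivity) _
    refine ⟨mul_nonneg hc₂ hlog0, ?_⟩
    have hlogup : Real.log (1 / ‖x‖) ≤ (n : ℝ) / ((N : ℝ) - β) := by
      rw [Real.log_div one_ne_zero hx0.ne', Real.log_one, zero_sub]
      have := Real.log_lt_log (Real.exp_pos _) h2
      rw [Real.log_exp] at this
      have hh : -(n : ℝ) / ((N : ℝ) - β) = -((n : ℝ) / ((N : ℝ) - β)) := by ring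
      linarith [this]
    have key : (((N : ℝ) - β) / (sphereArea N * n)) ^ ((N : ℝ)⁻¹) * ((n : ℝ) / ((N : ℝ) - β))
        = (1 / sphereArea N) ^ ((N : ℝ)⁻¹) * ((n : ℝ) / ((N : ℝ) - β)) ^ (((N : ℝ) - 1) / N) := by
      have hbase : ((N : ℝ) - β) / (sphereArea N * n)
          = (1 / sphereArea N) * ((n : ℝ) / ((N : ℝ) - β))⁻¹ := by
        field_simp
      have hsplit : ∀ u : ℝ, 0 < u → u ^ (-(N:ℝ)⁻¹) * u = u ^ (((N : ℝ) - 1) / N) := by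
        intro u hu
        have he : ((N:ℝ) - 1) / N = -(N:ℝ)⁻¹ + 1 := by field_simp; ring
        rw [he, Real.rpow_add hu, Real.rpow_one]
      rw [hbase, Real.mul_rpow (by positivity) (inv_nonneg.mpr ht.le), Real.inv_rpow ht.le,
        ← Real.rpow_neg ht.le, mul_assoc, hsplit _ ht]
    calc (((N : ℝ) - β) / (sphereArea N * n)) ^ ((N : ℝ)⁻¹) * Real.log (1 / ‖x‖)
        ≤ (((N : ℝ) - β) / (sphereArea N * n)) ^ ((N : ℝ)⁻¹) * ((n : ℝ) / ((N : ℝ) - β)) :=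
          mul_le_mul_of_nonneg_left hlogup hc₂
      _ = _ := key
  · exact ⟨hM0, le_refl _⟩

end algebra


/-- Lower bound for the singular Moser functional along the Moser sequence,
and its limit ω_{N-1}/(N-β). -/
theorem moser_functional_lower_bound {N : ℕ} (hN : 2 ≤ N) (β : ℝ)
    (hβ0 : 0 ≤ β) (hβ : β < N) :
    (∀ n : ℕ, 1 ≤ n →
      sphereArea N * phiN N n * Real.exp (-(n : ℝ)) / ((N : ℝ) - β)
        ≤ ∫ x : EuclideanSpace ℝ (Fin N),
            phiN N (alphaN N * (1 - β / N) *
              |moser N β n x| ^ ((N : ℝ) / ((N : ℝ) - 1))) * ‖x‖ ^ (-β)) ∧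
    Tendsto
      (fun n : ℕ => sphereArea N * phiN N n * Real.exp (-(n : ℝ)) / ((N : ℝ) - β))
      atTop (nhds (sphereArea N / ((N : ℝ) - β))) := by
  have hω := sphereArea_pos hN
  have hN0 : (0:ℝ) < N := by exact_mod_cast (by omega : 0 < N)
  have hN1 : (1:ℝ) < N := by exact_mod_cast (by omega : 1 < N)
  have hNβ : (0:ℝ) < (N:ℝ) - β := by linarith
  constructor
  · intro n hn
    have hn0 : (0:ℝ) < n := by exact_mod_cast (by omega : 0 < n)
    set q : ℝ := (N : ℝ) / ((N : ℝ) - 1) with hq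
    have hq0 : 0 < q := div_pos hN0 (by linarith)
    set M : ℝ := (1 / sphereArea N) ^ ((N : ℝ)⁻¹) * ((n : ℝ) / ((N : ℝ) - β)) ^ (((N : ℝ) - 1) / N)
      with hM
    have hM0 : 0 ≤ M := by
      rw [hM]
      exact mul_nonneg (Real.rpow_nonneg (by positivity) _)
        (Real.rpow_nonneg (by positivity) _)
    set r₀ : ℝ := Real.exp (-(n : ℝ) / ((N : ℝ) - β)) with hr₀def
    have hr₀ : 0 < r₀ := Real.exp_pos _
    have hr₀1 : r₀ < 1 := by
      rw [hr₀def, Real.exp_lt_one_iff, neg_div]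
      have : (0:ℝ) < (n:ℝ) / ((N:ℝ) - β) := by positivity
      linarith [this]
    have hc0 : 0 ≤ alphaN N * (1 - β / N) := by
      apply mul_nonneg
      · rw [alphaN_eq]; exact mul_nonneg hN0.le (Real.rpow_nonneg hω.le _)
      · rw [sub_nonneg]; exact (div_le_one hN0).mpr hβ.le
    have harg : ∀ x : EuclideanSpace ℝ (Fin N),
        0 ≤ alphaN N * (1 - β / N) * |moser N β n x| ^ q ∧
        alphaN N * (1 - β / N) * |moser N β n x| ^ q ≤ n := by
      intro x
      obtain ⟨hm0, hmle⟩ := moser_nonneg_le hN hn hβ0 hβ x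
      constructor
      · exact mul_nonneg hc0 (Real.rpow_nonneg (abs_nonneg _) _)
      · have habs : |moser N β n x| ≤ M := by rw [abs_of_nonneg hm0, hM]; exact hmle
        calc alphaN N * (1 - β / N) * |moser N β n x| ^ q
            ≤ alphaN N * (1 - β / N) * M ^ q :=
              mul_le_mul_of_nonneg_left (Real.rpow_le_rpow (abs_nonneg _) habs hq0.le) hc0
          _ = n := by rw [hM, hq]; exact const_identity hN hn hβ0 hβ
    set f : EuclideanSpace ℝ (Fin N) → ℝ := fun x =>
      phiN N (alphaN N * (1 - β / N) * |moser N β n x| ^ q) * ‖x‖ ^ (-β) with hf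
    have hfnonneg : ∀ x, 0 ≤ f x := fun x =>
      mul_nonneg (phiN_nonneg (harg x).1) (Real.rpow_nonneg (norm_nonneg x) _)
    have hfmeas : Measurable f := by
      rw [hf]
      exact (continuous_phiN.measurable.comp
        (((measurable_moser β n).abs.pow measurable_const).const_mul _)).mul
        (measurable_norm.pow measurable_const)
    set G : ℝ → ℝ := fun y => if y ≤ 1 then Real.exp n * y ^ (-β) else 0 with hG
    have hGmeas : Measurable G := by
      rw [hG]
      exact Measurable.ite measurableSet_Iic
        ((measurable_id.pow measurable_const).const_mul _) measurable_const
    have hGint : Integrable (fun x : EuclideanSpace ℝ (Fin N) => G ‖x‖) := by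
      refine aux_integrable (by omega) hGmeas ?_
      rw [← Set.Ioc_union_Ioi_eq_Ioi (zero_le_one (α := ℝ))]
      apply IntegrableOn.union
      · refine IntegrableOn.congr_fun
          (((intervalIntegral.intervalIntegrable_rpow'
            (by linarith : (-1:ℝ) < (N:ℝ) - 1 - β)).1).const_mul (Real.exp n))
          (fun y hy => ?_) measurableSet_Ioc
        have hy1 : y ≤ 1 := hy.2
        have hy0 : 0 < y := hy.1
        simp only [hG, if_pos hy1]
        rw [← Real.rpow_natCast y (N - 1), ← mul_assoc, mul_comm (y ^ (((N-1:ℕ)):ℝ)) (Real.exp n),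
          mul_assoc, ← Real.rpow_add hy0]
        congr 2
        push_cast [Nat.cast_sub (by omega : 1 ≤ N)]
        ring
      · refine IntegrableOn.congr_fun (integrableOn_zero) (fun y hy => ?_) measurableSet_Ioi
        have : ¬ (y ≤ 1) := not_le.mpr hy
        simp [hG, this]
    have hfle : ∀ x : EuclideanSpace ℝ (Fin N), ‖f x‖ ≤ G ‖x‖ := by
      intro x
      rw [Real.norm_eq_abs, abs_of_nonneg (hfnonneg x)]
      by_cases h : ‖x‖ ≤ 1
      · simp only [hG, if_pos h]
        refine mul_le_mul_of_nonneg_right ?_ (Real.rpow_nonneg (norm_nonneg x) _)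
        exact (phiN_le_exp (harg x).1).trans (Real.exp_le_exp.mpr (harg x).2)
      · simp only [hG, if_neg h]
        have h1 : (1:ℝ) ≤ ‖x‖ := (not_le.mp h).le
        have hm : moser N β n x = 0 := by unfold moser; rw [if_pos h1]
        simp only [hf, hm, abs_zero, Real.zero_rpow (ne_of_gt hq0), mul_zero,
          phiN_zero hN, zero_mul, le_refl]
    have hfint : Integrable f := hGint.mono' hfmeas.aestronglyMeasurable
      (Eventually.of_forall hfle)
    have hsub := setIntegral_le_integral (s := Metric.closedBall 0 r₀) hfint
      (Eventually.of_forall hfnonneg)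
    have hval : ∫ x : EuclideanSpace ℝ (Fin N) in Metric.closedBall 0 r₀, f x
        = phiN N n * (sphereArea N * r₀ ^ ((N:ℝ) - β) / ((N:ℝ) - β)) := by
      rw [setIntegral_congr_fun measurableSet_closedBall
        (g := fun x : EuclideanSpace ℝ (Fin N) => phiN N n * ‖x‖ ^ (-β)) ?_]
      · rw [integral_const_mul, ball_rpow_integral hN hβ hr₀]
      · intro x hx
        have hxr : ‖x‖ ≤ r₀ := mem_closedBall_zero_iff.mp hx
        have hx1 : ¬ (1 ≤ ‖x‖) := not_le.mpr (lt_of_le_of_lt hxr hr₀1)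
        have hx2 : ¬ (r₀ < ‖x‖) := not_lt.mpr hxr
        simp only [hf, moser, if_neg hx1, ← hr₀def, if_neg hx2, ← hM]
        rw [abs_of_nonneg hM0, hM, hq, const_identity hN hn hβ0 hβ]
    have hr₀pow : r₀ ^ ((N:ℝ) - β) = Real.exp (-(n:ℝ)) := by
      rw [hr₀def, Real.rpow_def_of_pos (Real.exp_pos _), Real.log_exp]
      congr 1
      field_simp
    calc sphereArea N * phiN N n * Real.exp (-(n:ℝ)) / ((N:ℝ) - β)
        = phiN N n * (sphereArea N * r₀ ^ ((N:ℝ) - β) / ((N:ℝ) - β)) := by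
          rw [hr₀pow]; ring
      _ = ∫ x : EuclideanSpace ℝ (Fin N) in Metric.closedBall 0 r₀, f x := hval.symm
      _ ≤ ∫ x : EuclideanSpace ℝ (Fin N), f x := hsub
  · have h2 : Tendsto (fun n : ℕ => phiN N n * Real.exp (-(n:ℝ))) atTop (nhds 1) := by
      have hsum : Tendsto (fun n : ℕ =>
          (∑ j ∈ Finset.range (N - 1), ((n:ℝ)) ^ j / (j.factorial : ℝ)) * Real.exp (-(n:ℝ)))
          atTop (nhds 0) := by
        have heq : ∀ n : ℕ, (∑ j ∈ Finset.range (N - 1), ((n:ℝ)) ^ j / (j.factorial : ℝ))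
            * Real.exp (-(n:ℝ))
            = ∑ j ∈ Finset.range (N - 1), ((n:ℝ) ^ j * Real.exp (-(n:ℝ))) / (j.factorial : ℝ) := by
          intro n
          rw [Finset.sum_mul]
          exact Finset.sum_congr rfl fun j _ => by ring
        simp only [heq]
        have h := tendsto_finset_sum (Finset.range (N - 1)) (fun j _ =>
          (((tendsto_pow_mul_exp_neg_atTop_nhds_zero j).comp
            tendsto_natCast_atTop_atTop).div_const ((j.factorial : ℝ))))
        simpa using h
      have hphi : ∀ n : ℕ, phiN N (n:ℝ) * Real.exp (-(n:ℝ))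
          = 1 - (∑ j ∈ Finset.range (N - 1), ((n:ℝ)) ^ j / (j.factorial : ℝ))
            * Real.exp (-(n:ℝ)) := by
        intro n
        unfold phiN
        rw [sub_mul, ← Real.exp_add, add_neg_cancel, Real.exp_zero]
      simp only [hphi]
      simpa using tendsto_const_nhds.sub hsum
    have h3 := h2.const_mul (sphereArea N / ((N:ℝ) - β))
    rw [mul_one] at h3
    exact h3.congr (fun n => by ring)
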